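/- If (A, B) is a positive pair, then for every y ∈ Y: sup over x ∈ X of |⟨By, x⟩|² / ⟨Ax, x⟩ = ⟨ω(A, B) y, y⟩ (with the convention 0/0 := 0). -/

import Mathlib

open scoped ComplexOrder ComplexConjugate
open Complex

noncomputable section

/-- For a linear map `R : V → H` into a Hilbert space, `adjMap R : H → V'` is the
operator `R*`, sending `h` to the antilinear functional `v ↦ (h | R v)`
(in Mathlib's convention, `v ↦ ⟪R v, h⟫`). -/
def adjMap {V H : Type*} [AddCommGroup V] [Module ℂ V]
    [NormedAddCommGroup H] [InnerProductSpace ℂ H] (R : V →ₗ[ℂ] H) :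
    H →ₗ[ℂ] (V →ₗ⋆[ℂ] ℂ) where
  toFun h :=
    { toFun := fun v => @inner ℂ _ _ (R v) h
      map_add' := fun v w => by simp [inner_add_left]
      map_smul' := fun c v => by simp [inner_smul_left]; ring }
  map_add' h₁ h₂ := by ext v; simp [inner_add_right]
  map_smul' c h := by ext v; simp [inner_smul_right]

/-- For `B : Y → X'`, the operator `B~ := B'↾X : X → Y'`, `(B~ x) y = conj (⟨B y, x⟩)`. -/
def Btilde {X Y : Type*} [AddCommGroup X] [Module ℂ X] [AddCommGroup Y] [Module ℂ Y]
    (B : Y →ₗ[ℂ] (X →ₗ⋆[ℂ] ℂ)) : X →ₗ[ℂ] (Y →ₗ⋆[ℂ] ℂ) where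
  toFun x :=
    { toFun := fun y => conj (B y x)
      map_add' := fun y₁ y₂ => by simp
      map_smul' := fun c y => by simp }
  map_add' x₁ x₂ := by ext y; simp
  map_smul' c x := by ext y; simp

open scoped InnerProductSpace

section InnerQuotient

variable {𝕜 E : Type*} [RCLike 𝕜] [NormedAddCommGroup E] [InnerProductSpace 𝕜 E]

theorem norm_inner_sq_div_norm_sq_le (u h : E) : ‖⟪u, h⟫_𝕜‖ ^ 2 / ‖u‖ ^ 2 ≤ ‖h‖ ^ 2 := by
  rcases eq_or_ne u 0 with rfl | hu
  · simp
  rw [div_le_iff₀ (by positivity)]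
  calc ‖⟪u, h⟫_𝕜‖ ^ 2 ≤ (‖u‖ * ‖h‖) ^ 2 := by gcongr; exact norm_inner_le_norm u h
    _ = ‖h‖ ^ 2 * ‖u‖ ^ 2 := by ring

theorem norm_inner_self_sq_div_norm_sq (h : E) : ‖⟪h, h⟫_𝕜‖ ^ 2 / ‖h‖ ^ 2 = ‖h‖ ^ 2 := by
  rcases eq_or_ne h 0 with rfl | hh
  · simp
  rw [inner_self_eq_norm_sq_to_K, norm_pow, RCLike.norm_ofReal, abs_norm]
  field_simp

/-- Cauchy–Schwarz bounds every quotient; at `h ≠ 0` the quotient is continuous with value `‖h‖²`,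
so `‖h‖²` lies in the closure of its values on `S`. -/
theorem isLUB_norm_inner_sq_div_norm_sq {S : Set E} {h : E} (hS : h ∈ closure S) :
    IsLUB ((fun u => ‖⟪u, h⟫_𝕜‖ ^ 2 / ‖u‖ ^ 2) '' S) (‖h‖ ^ 2) := by
  refine isLUB_of_mem_closure (Set.forall_mem_image.2 fun u _ => norm_inner_sq_div_norm_sq_le u h) ?_
  rcases eq_or_ne h 0 with rfl | hh
  · obtain ⟨u, hu⟩ := closure_nonempty_iff.1 ⟨0, hS⟩
    exact subset_closure ⟨u, hu, by simp⟩
  have hcont : ContinuousAt (fun u => ‖⟪u, h⟫_𝕜‖ ^ 2 / ‖u‖ ^ 2) h := by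
    fun_prop (disch := positivity)
  have := hcont.continuousWithinAt.mem_closure_image hS
  rwa [norm_inner_self_sq_div_norm_sq] at this

end InnerQuotient

@[simp]
theorem adjMap_apply {V H : Type*} [AddCommGroup V] [Module ℂ V]
    [NormedAddCommGroup H] [InnerProductSpace ℂ H] (R : V →ₗ[ℂ] H) (h : H) (v : V) :
    adjMap R h v = ⟪R v, h⟫_ℂ :=
  rfl

theorem re_adjMap_self {V H : Type*} [AddCommGroup V] [Module ℂ V]
    [NormedAddCommGroup H] [InnerProductSpace ℂ H] (R : V →ₗ[ℂ] H) (v : V) :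
    (adjMap R (R v) v).re = ‖R v‖ ^ 2 := by
  rw [adjMap_apply, ← RCLike.re_to_complex, inner_self_eq_norm_sq]

theorem schur_stmt17_general {X Y H : Type} [AddCommGroup X] [Module ℂ X]
    [AddCommGroup Y] [Module ℂ Y]
    [NormedAddCommGroup H] [InnerProductSpace ℂ H]
    (A : X →ₗ[ℂ] (X →ₗ⋆[ℂ] ℂ)) (B : Y →ₗ[ℂ] (X →ₗ⋆[ℂ] ℂ))
    (R : X →ₗ[ℂ] H) (hR : ∀ x, A x = adjMap R (R x))
    (T : Y →ₗ[ℂ] H) (hT : ∀ y, adjMap R (T y) = B y)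
    (hTran : ∀ y, T y ∈ closure (Set.range R)) :
    ∀ y, IsLUB (Set.range fun x => ‖B y x‖ ^ 2 / (A x x).re)
      (((adjMap T (T y)) y).re) := by
  intro y
  have hquot : (fun x => ‖B y x‖ ^ 2 / (A x x).re)
      = (fun u => ‖⟪u, T y⟫_ℂ‖ ^ 2 / ‖u‖ ^ 2) ∘ R := by
    funext x
    rw [← hT, hR, re_adjMap_self, Function.comp_apply, adjMap_apply]
  rw [hquot, Set.range_comp, re_adjMap_self]
  exact isLUB_norm_inner_sq_div_norm_sq (hTran y)

theorem schur_stmt17 {X Y H : Type} [AddCommGroup X] [Module ℂ X]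
    [AddCommGroup Y] [Module ℂ Y]
    [NormedAddCommGroup H] [InnerProductSpace ℂ H] [CompleteSpace H]
    (A : X →ₗ[ℂ] (X →ₗ⋆[ℂ] ℂ)) (B : Y →ₗ[ℂ] (X →ₗ⋆[ℂ] ℂ))
    (R : X →ₗ[ℂ] H) (hR : ∀ x, A x = adjMap R (R x))
    (T : Y →ₗ[ℂ] H) (hT : ∀ y, adjMap R (T y) = B y)
    (hTran : ∀ y, T y ∈ closure (Set.range R)) :
    ∀ y, IsLUB (Set.range fun x => ‖B y x‖ ^ 2 / (A x x).re)
      (((adjMap T (T y)) y).re) :=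
  schur_stmt17_general A B R hR T hT hTran
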